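/- arXiv:1805.09883 — 2 statements merged into one kernel-verified Lean document; each statement's English description precedes it below -/
import Mathlib

section
/- Let n ≥ 1, L, V > 0, N ∈ ℕ, and let u be a function of bounded variation on (0,L)^n with |Du|((0,L)^n) ≤ V. Divide [0,L]^n into subcubes □_ι for ι ∈ {0,1,…,N−1}^n and let u_ι denote the mean of u over □_ι. If κ¹, κ², …, κ^{N^n} is an enumeration of {0,1,…,N−1}^n such that each κ^{j+1} = κ^j + e_k for some k ∈ {1,…,n}, then Σ_{j=1}^{N^n−1} |u_{κ^{j+1}} − u_{κ^j}| ≤ 2V·(N/L)^{n−1}. -/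
open MeasureTheory Set

noncomputable def coveringNumber {α : Type*} (d : α → α → ℝ) (E : Set α) (ε : ℝ) : ℕ :=
  sInf {k | ∃ C : Finset (Set α), C.card = k ∧ (E ⊆ ⋃ s ∈ C, s) ∧
    (∀ s ∈ C, ∀ x ∈ s, ∀ y ∈ s, d x y ≤ 2 * ε)}

noncomputable def entropy {α : Type*} (d : α → α → ℝ) (E : Set α) (ε : ℝ) : ℝ :=
  Real.logb 2 (coveringNumber d E ε)

abbrev Eucl (n : ℕ) := EuclideanSpace ℝ (Fin n)

/-- The divergence of a `C^1` vector field on `ℝ^n`. -/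
noncomputable def divg {n : ℕ} (φ : Eucl n → Eucl n) (x : Eucl n) : ℝ :=
  ∑ i, fderiv ℝ φ x (EuclideanSpace.single i 1) i

/-- The set of numbers `∫_Ω u div φ` over test vector fields `φ ∈ C_c^1(Ω, ℝ^n)` with `‖φ‖ ≤ 1`;
its supremum is the total variation `|Du|(Ω)` of the distributional derivative. -/
def testIntegrals {n : ℕ} (u : Eucl n → ℝ) (Ω : Set (Eucl n)) : Set ℝ :=
  {v | ∃ φ : Eucl n → Eucl n, ContDiff ℝ 1 φ ∧ HasCompactSupport φ ∧ tsupport φ ⊆ Ω ∧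
    (∀ x, ‖φ x‖ ≤ 1) ∧ v = ∫ x in Ω, u x * divg φ x}

/-- The total variation `|Du|(Ω)` of the distributional derivative of `u` on `Ω`. -/
noncomputable def totalVariation {n : ℕ} (u : Eucl n → ℝ) (Ω : Set (Eucl n)) : ℝ :=
  sSup (testIntegrals u Ω)

def cube (n : ℕ) (L : ℝ) : Set (Eucl n) := {x | ∀ i, x i ∈ Icc (0 : ℝ) L}

def opencube (n : ℕ) (L : ℝ) : Set (Eucl n) := {x | ∀ i, x i ∈ Ioo (0 : ℝ) L}

/-- The class `F_{[L,M,V]}` of `L¹` functions on `[0,L]^n`, bounded by `M` in `L^∞`,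
whose distributional derivative is a finite Radon measure with `|Du|((0,L)^n) ≤ V`. -/
def Fclass (n : ℕ) (L M V : ℝ) : Set (Eucl n → ℝ) :=
  {u | IntegrableOn u (cube n L) ∧ (∀ᵐ x ∂(volume.restrict (cube n L)), |u x| ≤ M) ∧
    ∀ v ∈ testIntegrals u (opencube n L), v ≤ V}

/-- The `L¹` distance on `[0,L]^n`. -/
noncomputable def dL1 (n : ℕ) (L : ℝ) (u v : Eucl n → ℝ) : ℝ :=
  ∫ x in cube n L, |u x - v x|

/-- The subcube `□_ι = ιL/N + [0, L/N]^n` of `[0,L]^n`, for `ι ∈ {0,…,N-1}^n`. -/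
def subcube (n N : ℕ) (L : ℝ) (ι : Fin n → Fin N) : Set (Eucl n) :=
  {x | ∀ i, x i ∈ Icc (((ι i : ℕ) : ℝ) * (L / N)) ((((ι i : ℕ) : ℝ) + 1) * (L / N))}

/-- The mean value `u_ι = (N/L)^n ∫_{□_ι} u` of `u` over the subcube `□_ι`. -/
noncomputable def cubeAvg (n N : ℕ) (L : ℝ) (u : Eucl n → ℝ) (ι : Fin n → Fin N) : ℝ :=
  ((N : ℝ) / L) ^ n * ∫ x in subcube n N L ι, u x

/-!
Test the total variation against `φ = Σ_j b_j ψ_j e_{k_j}`, where `h = L/N` is the mesh and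
`κ^{j+1} = κ^j + e_{k_j}`. The scalar bump `ψ_j` is a product of one-dimensional profiles: in
direction `k_j` a smoothed tent rising across the cell of `κ^j` and falling across that of
`κ^{j+1}`, in the other directions a smoothed plateau on the cell. As the smoothing scale
`δ → 0`, `∂_{k_j} ψ_j` tends to `1_{□_{κ^j}} - 1_{□_{κ^{j+1}}}`, so `∫ u div φ` tends to
`Σ_j b_j (∫_{□_{κ^j}} u - ∫_{□_{κ^{j+1}}} u)`; with `b_j = ±(2h)⁻¹` this is
`(2h)⁻¹ Σ_j |∫_{□_{κ^{j+1}}} u - ∫_{□_{κ^j}} u|`. Since `0 ≤ ψ_j ≤ h` and, the `κ^j` being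
distinct, every point lies in the support of at most two `ψ_j`, `‖φ‖ ≤ 1`; hence the sum is at
most `2hV`, and multiplying by `(N/L)^n` gives the claim.
-/

open MeasureTheory Set Filter Topology Real
open scoped Finset

noncomputable def plateau (a b δ t : ℝ) : ℝ :=
  smoothTransition ((t - a) / δ - 1) * smoothTransition ((b - t) / δ - 1)

section Plateau

variable {a b δ t : ℝ}

lemma plateau_nonneg (a b δ t : ℝ) : 0 ≤ plateau a b δ t :=
  mul_nonneg (smoothTransition.nonneg _) (smoothTransition.nonneg _)

lemma plateau_le_one (a b δ t : ℝ) : plateau a b δ t ≤ 1 :=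
  mul_le_one₀ (smoothTransition.le_one _) (smoothTransition.nonneg _) (smoothTransition.le_one _)

lemma contDiff_plateau {m : ℕ∞} (a b δ : ℝ) : ContDiff ℝ m (plateau a b δ) := by
  have hs := smoothTransition.contDiff (n := m)
  exact (hs.comp ((contDiff_id.sub contDiff_const).div_const δ |>.sub contDiff_const)).mul
    (hs.comp ((contDiff_const.sub contDiff_id).div_const δ |>.sub contDiff_const))

lemma plateau_sub (a b δ h t : ℝ) : plateau a b δ (t - h) = plateau (a + h) (b + h) δ t := by
  unfold plateau; ring_nf

lemma plateau_eq_zero (hδ : 0 < δ) (ht : t ∉ Ioo (a + δ) (b - δ)) : plateau a b δ t = 0 := by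
  rw [mem_Ioo, not_and_or, not_lt, not_lt] at ht
  rcases ht with ht | ht
  · rw [plateau, smoothTransition.zero_of_nonpos, zero_mul]
    rw [sub_nonpos, div_le_one hδ]; linarith
  · rw [plateau, smoothTransition.zero_of_nonpos (x := (b - t) / δ - 1), mul_zero]
    rw [sub_nonpos, div_le_one hδ]; linarith

lemma plateau_eq_one (hδ : 0 < δ) (hat : a + 2 * δ ≤ t) (htb : t ≤ b - 2 * δ) :
    plateau a b δ t = 1 := by
  rw [plateau, smoothTransition.one_of_one_le, smoothTransition.one_of_one_le, mul_one] <;>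
  · rw [le_sub_iff_add_le, le_div_iff₀ hδ]; linarith

lemma tendsto_plateau (a b t : ℝ) :
    Tendsto (fun δ => plateau a b δ t) (𝓝[>] 0) (𝓝 ((Ioo a b).indicator 1 t)) := by
  by_cases ht : t ∈ Ioo a b
  · rw [indicator_of_mem ht]
    refine tendsto_const_nhds.congr' ?_
    have hpos : 0 < min (t - a) (b - t) / 2 := by
      have := ht.1; have := ht.2; positivity
    filter_upwards [Ioo_mem_nhdsGT hpos] with δ hδ
    have := min_le_left (t - a) (b - t); have := min_le_right (t - a) (b - t)
    exact (plateau_eq_one hδ.1 (by linarith [hδ.2]) (by linarith [hδ.2])).symm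
  · rw [indicator_of_notMem ht]
    refine tendsto_const_nhds.congr' ?_
    filter_upwards [self_mem_nhdsWithin] with δ hδ
    refine (plateau_eq_zero hδ fun h => ht ⟨?_, ?_⟩).symm <;> linarith [h.1, h.2, mem_Ioi.1 hδ]

end Plateau

noncomputable def tent (a b δ h t : ℝ) : ℝ := ∫ s in (t - h)..t, plateau a b δ s

section Tent

variable {a b δ h t : ℝ}

lemma tent_nonneg (hh : 0 ≤ h) : 0 ≤ tent a b δ h t :=
  intervalIntegral.integral_nonneg (by linarith) fun _ _ => plateau_nonneg _ _ _ _

lemma tent_le (hh : 0 ≤ h) : tent a b δ h t ≤ h := by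
  have := intervalIntegral.integral_mono_on (by linarith)
    ((contDiff_plateau (m := 0) a b δ).continuous.intervalIntegrable (t - h) t)
    (intervalIntegrable_const (μ := volume)) fun s _ => plateau_le_one a b δ s
  simpa [tent] using this

lemma tent_eq_zero (hδ : 0 < δ) (hh : 0 ≤ h) (ht : t ∉ Ioo (a + δ) (b + h - δ)) :
    tent a b δ h t = 0 := by
  rw [tent, intervalIntegral.integral_congr (g := fun _ => 0) fun s hs => ?_,
    intervalIntegral.integral_zero]
  rw [uIcc_of_le (by linarith)] at hs
  refine plateau_eq_zero hδ fun h' => ht ⟨?_, ?_⟩ <;> linarith [h'.1, h'.2, hs.1, hs.2]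

lemma hasDerivAt_tent (a b δ h t : ℝ) :
    HasDerivAt (tent a b δ h) (plateau a b δ t - plateau a b δ (t - h)) t := by
  have hc := (contDiff_plateau (m := 0) a b δ).continuous
  have hF (y : ℝ) : HasDerivAt (fun s => ∫ x in (0 : ℝ)..s, plateau a b δ x) (plateau a b δ y) y :=
    intervalIntegral.integral_hasDerivAt_right (hc.intervalIntegrable 0 y)
      (hc.stronglyMeasurableAtFilter _ _) hc.continuousAt
  have hG := (hF (t - h)).comp t ((hasDerivAt_id t).sub_const h)
  rw [mul_one] at hG
  refine ((hF t).sub hG).congr_of_eventuallyEq (Eventually.of_forall fun s => ?_)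
  exact (intervalIntegral.integral_interval_sub_left (hc.intervalIntegrable 0 s)
    (hc.intervalIntegrable 0 (s - h))).symm

lemma contDiff_tent (a b δ h : ℝ) : ContDiff ℝ 1 (tent a b δ h) := by
  rw [contDiff_one_iff_deriv]
  refine ⟨fun t => (hasDerivAt_tent a b δ h t).differentiableAt, ?_⟩
  rw [funext fun t => (hasDerivAt_tent a b δ h t).deriv]
  have hc := (contDiff_plateau (m := 0) a b δ).continuous
  exact hc.sub (hc.comp (continuous_sub_right h))

end Tent

section PairBump

variable {n : ℕ} {h δ : ℝ} {c : Fin n → ℕ} {k : Fin n} {x : Eucl n}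

noncomputable def pairBump (h δ : ℝ) (c : Fin n → ℕ) (k : Fin n) (x : Eucl n) : ℝ :=
  tent (c k * h) ((c k + 1) * h) δ h (x k) *
    ∏ i ∈ Finset.univ.erase k, plateau (c i * h) ((c i + 1) * h) δ (x i)

noncomputable def pairBumpDeriv (h δ : ℝ) (c : Fin n → ℕ) (k : Fin n) (x : Eucl n) : ℝ :=
  (plateau (c k * h) ((c k + 1) * h) δ (x k) - plateau ((c k + 1) * h) ((c k + 2) * h) δ (x k)) *
    ∏ i ∈ Finset.univ.erase k, plateau (c i * h) ((c i + 1) * h) δ (x i)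

lemma contDiff_pairBump (h δ : ℝ) (c : Fin n → ℕ) (k : Fin n) :
    ContDiff ℝ 1 (pairBump h δ c k) :=
  ((contDiff_tent _ _ _ _).comp (EuclideanSpace.proj (𝕜 := ℝ) k).contDiff).mul <|
    contDiff_prod fun i _ => (contDiff_plateau _ _ _).comp (EuclideanSpace.proj (𝕜 := ℝ) i).contDiff

lemma pairBump_nonneg (hh : 0 ≤ h) : 0 ≤ pairBump h δ c k x :=
  mul_nonneg (tent_nonneg hh) (Finset.prod_nonneg fun _ _ => plateau_nonneg _ _ _ _)

lemma pairBump_le (hh : 0 ≤ h) : pairBump h δ c k x ≤ h :=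
  (mul_le_of_le_one_right (tent_nonneg hh) <| Finset.prod_le_one
    (fun _ _ => plateau_nonneg _ _ _ _) fun _ _ => plateau_le_one _ _ _ _).trans (tent_le hh)

lemma mem_Ioo_of_pairBump_ne_zero (hδ : 0 < δ) (hh : 0 ≤ h) (hx : pairBump h δ c k x ≠ 0)
    (i : Fin n) :
    x i ∈ Ioo (c i * h + δ) (((c + Pi.single k 1 : Fin n → ℕ) i + 1 : ℕ) * h - δ) := by
  rw [pairBump, mul_ne_zero_iff, Finset.prod_ne_zero_iff] at hx
  rcases eq_or_ne i k with rfl | hik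
  · have := not_imp_comm.1 (tent_eq_zero hδ hh) hx.1
    simp only [Pi.add_apply, Pi.single_eq_same]; push_cast at this ⊢
    constructor <;> linarith [this.1, this.2]
  · have := not_imp_comm.1 (plateau_eq_zero hδ)
      (hx.2 i (Finset.mem_erase.2 ⟨hik, Finset.mem_univ _⟩))
    simpa [Pi.single_apply, hik] using this

lemma hasLineDerivAt_pairBump (h δ : ℝ) (c : Fin n → ℕ) (k : Fin n) (x : Eucl n) :
    HasLineDerivAt ℝ (pairBump h δ c k) (pairBumpDeriv h δ c k x) x
      (EuclideanSpace.single k 1) := by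
  have hline : (fun t : ℝ => pairBump h δ c k (x + t • EuclideanSpace.single k 1)) =
      fun t => tent (c k * h) ((c k + 1) * h) δ h (x k + t) *
        ∏ i ∈ Finset.univ.erase k, plateau (c i * h) ((c i + 1) * h) δ (x i) := by
    funext t
    refine congrArg₂ _ (by simp) (Finset.prod_congr rfl fun i hi => ?_)
    simp [Finset.ne_of_mem_erase hi]
  have hd := (hasDerivAt_tent (c k * h) ((c k + 1) * h) δ h (x k + 0)).comp_const_add (x k) 0
  rw [add_zero, plateau_sub, show (c k : ℝ) * h + h = (c k + 1) * h by ring,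
    show ((c k : ℝ) + 1) * h + h = (c k + 2) * h by ring] at hd
  rw [HasLineDerivAt, hline, pairBumpDeriv]
  exact hd.mul_const _

lemma fderiv_pairBump_single (x : Eucl n) :
    fderiv ℝ (pairBump h δ c k) x (EuclideanSpace.single k 1) = pairBumpDeriv h δ c k x := by
  rw [← ((contDiff_pairBump h δ c k).differentiable one_ne_zero x).lineDeriv_eq_fderiv]
  exact (hasLineDerivAt_pairBump h δ c k x).lineDeriv

lemma continuous_pairBumpDeriv (h δ : ℝ) (c : Fin n → ℕ) (k : Fin n) :
    Continuous (pairBumpDeriv h δ c k) := by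
  have hθ (a b : ℝ) (i : Fin n) : Continuous fun x : Eucl n => plateau a b δ (x i) :=
    (contDiff_plateau (m := 0) a b δ).continuous.comp (EuclideanSpace.proj (𝕜 := ℝ) i).continuous
  exact ((hθ _ _ k).sub (hθ _ _ k)).mul (continuous_finsetProd _ fun i _ => hθ _ _ i)

lemma abs_pairBumpDeriv_le_one (x : Eucl n) : |pairBumpDeriv h δ c k x| ≤ 1 := by
  rw [pairBumpDeriv, abs_mul]
  refine mul_le_one₀ ?_ (abs_nonneg _) ?_
  · rw [abs_sub_le_iff]
    constructor <;> linarith [plateau_nonneg (c k * h) ((c k + 1) * h) δ (x k),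
      plateau_le_one (c k * h) ((c k + 1) * h) δ (x k),
      plateau_nonneg ((c k + 1) * h) ((c k + 2) * h) δ (x k),
      plateau_le_one ((c k + 1) * h) ((c k + 2) * h) δ (x k)]
  · rw [abs_of_nonneg (Finset.prod_nonneg fun _ _ => plateau_nonneg _ _ _ _)]
    exact Finset.prod_le_one (fun _ _ => plateau_nonneg _ _ _ _) fun _ _ => plateau_le_one _ _ _ _

end PairBump

section Cells

variable {n : ℕ}

def openCell (h : ℝ) (c : Fin n → ℕ) : Set (Eucl n) :=
  {x | ∀ i, x i ∈ Ioo (c i * h) ((c i + 1) * h)}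

lemma indicator_openCell (h : ℝ) (c : Fin n → ℕ) (x : Eucl n) :
    (openCell h c).indicator 1 x =
      ∏ i, (Ioo (c i * h) ((c i + 1) * h)).indicator (1 : ℝ → ℝ) (x i) := by
  classical
  simp [openCell, Set.indicator, Finset.prod_boole]

lemma measurableSet_openCell (h : ℝ) (c : Fin n → ℕ) : MeasurableSet (openCell h c) := by
  have : openCell h c = ⋂ i, (fun x : Eucl n => x i) ⁻¹' Ioo (c i * h) ((c i + 1) * h) := by
    ext; simp [openCell]
  rw [this]
  exact MeasurableSet.iInter fun i => measurableSet_Ioo.preimage (by fun_prop)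

lemma subcube_ae_eq_openCell (N : ℕ) (L : ℝ) (ι : Fin n → Fin N) :
    subcube n N L ι =ᵐ[volume] openCell (L / N) (fun i => ι i) := by
  have hIcc : subcube n N L ι = WithLp.ofLp ⁻¹' univ.pi fun i =>
      Icc ((ι i : ℕ) * (L / N)) (((ι i : ℕ) + 1) * (L / N)) := by
    ext; simp only [subcube, mem_preimage, mem_univ_pi]; rfl
  have hIoo : openCell (L / N) (fun i => ι i) = WithLp.ofLp ⁻¹' univ.pi fun i =>
      Ioo ((ι i : ℕ) * (L / N)) (((ι i : ℕ) + 1) * (L / N)) := by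
    ext; simp only [openCell, mem_preimage, mem_univ_pi]; rfl
  rw [hIcc, hIoo]
  exact ((PiLp.volume_preserving_ofLp (Fin n)).quasiMeasurePreserving.preimage_ae_eq
    Measure.pi_Ioo_ae_eq_pi_Icc).symm

lemma setIntegral_mul_indicator_sub_indicator {α : Type*} [MeasurableSpace α] {μ : Measure α}
    {Ω A B : Set α} {u : α → ℝ} (hu : IntegrableOn u Ω μ) (hA : MeasurableSet A)
    (hB : MeasurableSet B) (hAΩ : A ⊆ Ω) (hBΩ : B ⊆ Ω) :
    ∫ x in Ω, u x * (A.indicator 1 x - B.indicator 1 x) ∂μ =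
      (∫ x in A, u x ∂μ) - ∫ x in B, u x ∂μ := by
  have hind (S : Set α) (x : α) : u x * S.indicator 1 x = S.indicator u x := by
    by_cases hx : x ∈ S <;> simp [hx]
  simp_rw [mul_sub, hind]
  rw [integral_sub (hu.indicator hA) (hu.indicator hB), setIntegral_indicator hA,
    setIntegral_indicator hB, inter_eq_right.2 hAΩ, inter_eq_right.2 hBΩ]

lemma tendsto_pairBumpDeriv (h : ℝ) (c : Fin n → ℕ) (k : Fin n) (x : Eucl n) :
    Tendsto (fun δ => pairBumpDeriv h δ c k x) (𝓝[>] 0)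
      (𝓝 ((openCell h c).indicator 1 x - (openCell h (c + Pi.single k 1)).indicator 1 x)) := by
  have hlim := ((tendsto_plateau (c k * h) ((c k + 1) * h) (x k)).sub
    (tendsto_plateau ((c k + 1) * h) ((c k + 2) * h) (x k))).mul
    (tendsto_finsetProd (Finset.univ.erase k) fun i _ =>
      tendsto_plateau (c i * h) ((c i + 1) * h) (x i))
  convert hlim using 2
  · rfl
  rw [indicator_openCell, indicator_openCell, ← Finset.mul_prod_erase _ _ (Finset.mem_univ k),
    ← Finset.mul_prod_erase _ _ (Finset.mem_univ k), sub_mul]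
  congr 2
  · simp only [Pi.add_apply, Pi.single_eq_same]; push_cast; ring_nf
  · refine Finset.prod_congr rfl fun i hi => ?_
    simp [Finset.ne_of_mem_erase hi]

lemma tendsto_setIntegral_mul_pairBumpDeriv {h : ℝ} {c : Fin n → ℕ} {k : Fin n}
    {Ω : Set (Eucl n)} {u : Eucl n → ℝ}
    (hu : IntegrableOn u Ω) (hcΩ : openCell h c ⊆ Ω)
    (hcΩ' : openCell h (c + Pi.single k 1) ⊆ Ω) :
    Tendsto (fun δ => ∫ x in Ω, u x * pairBumpDeriv h δ c k x) (𝓝[>] 0)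
      (𝓝 ((∫ x in openCell h c, u x) - ∫ x in openCell h (c + Pi.single k 1), u x)) := by
  rw [← setIntegral_mul_indicator_sub_indicator hu (measurableSet_openCell h _)
    (measurableSet_openCell h _) hcΩ hcΩ']
  refine tendsto_integral_filter_of_dominated_convergence (fun x => |u x|)
    (Eventually.of_forall fun δ => hu.aestronglyMeasurable.mul
      (continuous_pairBumpDeriv h δ c k).aestronglyMeasurable)
    (Eventually.of_forall fun δ => Eventually.of_forall fun x => ?_) hu.abs
    (Eventually.of_forall fun x => (tendsto_pairBumpDeriv h c k x).const_mul (u x))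
  rw [Real.norm_eq_abs, abs_mul]
  exact mul_le_of_le_one_right (abs_nonneg _) (abs_pairBumpDeriv_le_one x)

end Cells

lemma ceil_div_sub_one_eq {h t : ℝ} {m : ℕ} (hh : 0 < h) (hmt : m * h < t) (htm : t ≤ (m + 1) * h) :
    ⌈t / h⌉ - 1 = m := by
  rw [sub_eq_iff_eq_add, Int.ceil_eq_iff]
  push_cast
  constructor
  · rw [add_sub_cancel_right, lt_div_iff₀ hh]; exact hmt
  · rw [div_le_iff₀ hh]; exact htm

lemma Finset.card_filter_eq_or_eq_le_two {J α : Type*} [Fintype J] [DecidableEq α] {f g : J → α}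
    (hf : Function.Injective f) (hg : Function.Injective g) (a : α) :
    #{j | f j = a ∨ g j = a} ≤ 2 := by
  classical
  rw [Finset.filter_or]
  refine (Finset.card_union_le _ _).trans (add_le_add (b := 1) (d := 1) ?_ ?_) <;>
  refine Finset.card_le_one.2 fun i hi j hj => ?_
  · exact hf ((Finset.mem_filter.1 hi).2.trans (Finset.mem_filter.1 hj).2.symm)
  · exact hg ((Finset.mem_filter.1 hi).2.trans (Finset.mem_filter.1 hj).2.symm)

section CellIndex

variable {n : ℕ} {h δ : ℝ} {x : Eucl n}

/-- `x` lies in the half-open cell `∏ᵢ (mᵢ h, (mᵢ + 1) h]` with `m = cellIndex h x`. -/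
noncomputable def cellIndex (h : ℝ) (x : Eucl n) (i : Fin n) : ℤ := ⌈x i / h⌉ - 1

lemma cellIndex_eq_of_pairBump_ne_zero {c : Fin n → ℕ} {k : Fin n} (hδ : 0 < δ) (hh : 0 < h)
    (hx : pairBump h δ c k x ≠ 0) :
    cellIndex h x = (fun i => (c i : ℤ)) ∨
      cellIndex h x = fun i => ((c + Pi.single k 1 : Fin n → ℕ) i : ℤ) := by
  have hmem := mem_Ioo_of_pairBump_ne_zero hδ hh.le hx
  by_cases hk : x k ≤ (c k + 1) * h
  · left; funext i
    refine ceil_div_sub_one_eq hh (by linarith [(hmem i).1]) ?_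
    rcases eq_or_ne i k with rfl | hik
    · exact hk
    · have := (hmem i).2; simp [hik] at this; linarith
  · right; funext i
    rcases eq_or_ne i k with rfl | hik
    · have := (hmem i).2; simp only [Pi.add_apply, Pi.single_eq_same] at this ⊢
      exact ceil_div_sub_one_eq hh (by push_cast; linarith) (by push_cast at this ⊢; linarith)
    · have h1 := (hmem i).1; have h2 := (hmem i).2
      simp only [Pi.add_apply, Pi.single_apply, hik, if_false, add_zero] at h2 ⊢
      exact ceil_div_sub_one_eq hh (by linarith) (by push_cast at h2; linarith)

variable {J : Type*} [Fintype J] {c : J → Fin n → ℕ} {k : J → Fin n}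

lemma sum_pairBump_le (hδ : 0 < δ) (hh : 0 < h) (hc : Function.Injective c)
    (hc' : Function.Injective fun j => c j + Pi.single (k j) 1) (x : Eucl n) :
    ∑ j, pairBump h δ (c j) (k j) x ≤ 2 * h := by
  classical
  have hcast : Function.Injective fun m : Fin n → ℕ => fun i => (m i : ℤ) :=
    Function.Injective.comp_left Nat.cast_injective
  set T : Finset J := {j | (fun i => (c j i : ℤ)) = cellIndex h x ∨
    (fun i => ((c j + Pi.single (k j) 1 : Fin n → ℕ) i : ℤ)) = cellIndex h x}
  have hT : #T ≤ 2 := Finset.card_filter_eq_or_eq_le_two (hcast.comp hc) (hcast.comp hc') _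
  calc ∑ j, pairBump h δ (c j) (k j) x = ∑ j ∈ T, pairBump h δ (c j) (k j) x := by
        refine (Finset.sum_subset (Finset.subset_univ T) fun j _ hj => ?_).symm
        by_contra hne
        exact hj (Finset.mem_filter.2 ⟨Finset.mem_univ j,
          (cellIndex_eq_of_pairBump_ne_zero hδ hh hne).imp Eq.symm Eq.symm⟩)
    _ ≤ #T • h := Finset.sum_le_card_nsmul _ _ _ fun j _ => pairBump_le hh.le
    _ ≤ 2 * h := by rw [nsmul_eq_mul]; gcongr; exact_mod_cast hT

end CellIndex

lemma divg_sum_smul_single {n : ℕ} {J : Type*} [Fintype J] (f : J → Eucl n → ℝ) (k : J → Fin n)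
    (x : Eucl n) (hf : ∀ j, DifferentiableAt ℝ (f j) x) :
    divg (fun y => ∑ j, f j y • EuclideanSpace.single (k j) (1 : ℝ)) x =
      ∑ j, fderiv ℝ (f j) x (EuclideanSpace.single (k j) 1) := by
  have hD : HasFDerivAt (fun y => ∑ j, f j y • EuclideanSpace.single (k j) (1 : ℝ))
      (∑ j, (fderiv ℝ (f j) x).smulRight (EuclideanSpace.single (k j) (1 : ℝ))) x :=
    HasFDerivAt.fun_sum fun j _ => (hf j).hasFDerivAt.smul_const _
  rw [divg, hD.fderiv]
  simp [Finset.sum_comm (γ := Fin n), Pi.single_apply]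

lemma isCompact_setOf_forall_mem_Icc (n : ℕ) (a b : ℝ) :
    IsCompact {x : Eucl n | ∀ i, x i ∈ Icc a b} := by
  convert (PiLp.continuousLinearEquiv 2 ℝ fun _ : Fin n => ℝ).toHomeomorph.isCompact_preimage.2
    (isCompact_univ_pi fun _ => isCompact_Icc (a := a) (b := b)) using 1
  ext; simp [Pi.le_def, forall_and]

section PairField

variable {n : ℕ} {J : Type*} [Fintype J] {h δ L : ℝ} {b : J → ℝ} {c : J → Fin n → ℕ}
  {k : J → Fin n}

noncomputable def pairField (h δ : ℝ) (b : J → ℝ) (c : J → Fin n → ℕ) (k : J → Fin n)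
    (x : Eucl n) : Eucl n :=
  ∑ j, (b j * pairBump h δ (c j) (k j) x) • EuclideanSpace.single (k j) (1 : ℝ)

lemma contDiff_pairField (h δ : ℝ) (b : J → ℝ) (c : J → Fin n → ℕ) (k : J → Fin n) :
    ContDiff ℝ 1 (pairField h δ b c k) :=
  ContDiff.sum fun j _ =>
    (contDiff_const.mul (contDiff_pairBump h δ (c j) (k j))).smul contDiff_const

lemma divg_pairField (x : Eucl n) :
    divg (pairField h δ b c k) x = ∑ j, b j * pairBumpDeriv h δ (c j) (k j) x := by
  have hd (j : J) := (contDiff_pairBump h δ (c j) (k j)).differentiable one_ne_zero x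
  unfold pairField
  rw [divg_sum_smul_single _ k x fun j => (hd j).const_mul (b j)]
  simp_rw [fderiv_const_mul (hd _), FunLike.coe_smul, Pi.smul_apply, fderiv_pairBump_single,
    smul_eq_mul]

lemma norm_pairField_le_one (hδ : 0 < δ) (hh : 0 < h) (hb : ∀ j, |b j| ≤ (2 * h)⁻¹)
    (hc : Function.Injective c) (hc' : Function.Injective fun j => c j + Pi.single (k j) 1)
    (x : Eucl n) : ‖pairField h δ b c k x‖ ≤ 1 :=
  calc ‖pairField h δ b c k x‖
      ≤ ∑ j, ‖(b j * pairBump h δ (c j) (k j) x) • EuclideanSpace.single (k j) (1 : ℝ)‖ :=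
        norm_sum_le _ _
    _ = ∑ j, |b j| * pairBump h δ (c j) (k j) x := by
        simp [norm_smul, abs_of_nonneg (pairBump_nonneg hh.le)]
    _ ≤ ∑ j, (2 * h)⁻¹ * pairBump h δ (c j) (k j) x :=
        Finset.sum_le_sum fun j _ => mul_le_mul_of_nonneg_right (hb j) (pairBump_nonneg hh.le)
    _ ≤ (2 * h)⁻¹ * (2 * h) := by
        rw [← Finset.mul_sum]; gcongr; exact sum_pairBump_le hδ hh hc hc' x
    _ = 1 := inv_mul_cancel₀ (by positivity)

lemma pairField_eq_zero (hδ : 0 < δ) (hh : 0 ≤ h)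
    (hgrid : ∀ j i, (((c j + Pi.single (k j) 1 : Fin n → ℕ) i + 1 : ℕ) : ℝ) * h ≤ L) {x : Eucl n}
    (hx : x ∉ {x : Eucl n | ∀ i, x i ∈ Icc δ (L - δ)}) : pairField h δ b c k x = 0 := by
  refine Finset.sum_eq_zero fun j _ => ?_
  by_cases hj : pairBump h δ (c j) (k j) x = 0
  · rw [hj, mul_zero, zero_smul]
  refine absurd (fun i => ?_) hx
  have hmem := mem_Ioo_of_pairBump_ne_zero hδ hh hj i
  have := hgrid j i
  have : 0 ≤ (c j i : ℝ) * h := by positivity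
  exact ⟨by linarith [hmem.1], by linarith [hmem.2]⟩

lemma integral_mul_divg_pairField_mem_testIntegrals (hδ : 0 < δ) (hh : 0 < h)
    (hb : ∀ j, |b j| ≤ (2 * h)⁻¹) (hc : Function.Injective c)
    (hc' : Function.Injective fun j => c j + Pi.single (k j) 1)
    (hgrid : ∀ j i, (((c j + Pi.single (k j) 1 : Fin n → ℕ) i + 1 : ℕ) : ℝ) * h ≤ L)
    (u : Eucl n → ℝ) :
    ∫ x in opencube n L, u x * divg (pairField h δ b c k) x ∈ testIntegrals u (opencube n L) := by
  set K := {x : Eucl n | ∀ i, x i ∈ Icc δ (L - δ)}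
  have hK : IsCompact K := isCompact_setOf_forall_mem_Icc n δ (L - δ)
  have hzero : ∀ x ∉ K, pairField h δ b c k x = 0 := fun x => pairField_eq_zero hδ hh.le hgrid
  refine ⟨pairField h δ b c k, contDiff_pairField h δ b c k, HasCompactSupport.intro hK hzero,
    ?_, norm_pairField_le_one hδ hh hb hc hc', rfl⟩
  refine (closure_minimal (Function.support_subset_iff'.2 hzero) hK.isClosed).trans fun x hx i => ?_
  exact ⟨by linarith [(hx i).1], by linarith [(hx i).2]⟩

lemma tendsto_integral_mul_divg_pairField {u : Eucl n → ℝ} {Ω : Set (Eucl n)}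
    (hu : IntegrableOn u Ω) (hcΩ : ∀ j, openCell h (c j) ⊆ Ω)
    (hcΩ' : ∀ j, openCell h (c j + Pi.single (k j) 1) ⊆ Ω) :
    Tendsto (fun δ => ∫ x in Ω, u x * divg (pairField h δ b c k) x) (𝓝[>] 0)
      (𝓝 (∑ j, b j * ((∫ x in openCell h (c j), u x) -
        ∫ x in openCell h (c j + Pi.single (k j) 1), u x))) := by
  have hint (δ : ℝ) (j : J) : IntegrableOn (fun x => u x * pairBumpDeriv h δ (c j) (k j) x) Ω :=
    hu.mul_bdd (continuous_pairBumpDeriv h δ _ _).aestronglyMeasurable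
      (Eventually.of_forall fun x => (Real.norm_eq_abs _).trans_le (abs_pairBumpDeriv_le_one x))
  have hsplit (δ : ℝ) : ∫ x in Ω, u x * divg (pairField h δ b c k) x =
      ∑ j, b j * ∫ x in Ω, u x * pairBumpDeriv h δ (c j) (k j) x := by
    simp_rw [divg_pairField, Finset.mul_sum, mul_left_comm (u _) (b _)]
    rw [integral_finsetSum _ fun j _ => (hint δ j).const_mul (b j)]
    simp_rw [integral_const_mul]
  simp_rw [hsplit]
  exact tendsto_finsetSum _ fun j _ =>
    (tendsto_setIntegral_mul_pairBumpDeriv hu (hcΩ j) (hcΩ' j)).const_mul (b j)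

end PairField

theorem sum_abs_setIntegral_openCell_sub_le {n : ℕ} {J : Type*} [Fintype J] {h L V : ℝ}
    (hh : 0 < h) {u : Eucl n → ℝ} (hu : IntegrableOn u (opencube n L))
    (hV : ∀ v ∈ testIntegrals u (opencube n L), v ≤ V) {c : J → Fin n → ℕ} {k : J → Fin n}
    (hc : Function.Injective c) (hc' : Function.Injective fun j => c j + Pi.single (k j) 1)
    (hgrid : ∀ j i, (((c j + Pi.single (k j) 1 : Fin n → ℕ) i + 1 : ℕ) : ℝ) * h ≤ L) :
    ∑ j, |(∫ x in openCell h (c j + Pi.single (k j) 1), u x) - ∫ x in openCell h (c j), u x| ≤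
      2 * h * V := by
  set I := fun j => ∫ x in openCell h (c j), u x
  set I' := fun j => ∫ x in openCell h (c j + Pi.single (k j) 1), u x
  set b : J → ℝ := fun j => (2 * h)⁻¹ * SignType.sign (I j - I' j)
  have hb (j : J) : |b j| ≤ (2 * h)⁻¹ := by
    rw [abs_mul, abs_of_pos (by positivity)]
    refine mul_le_of_le_one_right (by positivity) ?_
    cases SignType.sign (I j - I' j) <;> simp
  have hcells (j : J) (m : Fin n → ℕ) (hm : m ≤ c j + Pi.single (k j) 1) :
      openCell h m ⊆ opencube n L := fun x hx i => by
    have hmi : ((m i + 1 : ℕ) : ℝ) * h ≤ L := le_trans (by gcongr; exact hm i) (hgrid j i)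
    push_cast at hmi
    exact ⟨lt_of_le_of_lt (by positivity) (hx i).1, (hx i).2.trans_le hmi⟩
  have hlim := tendsto_integral_mul_divg_pairField (b := b) hu
    (fun j => hcells j _ le_self_add) (fun j => hcells j _ le_rfl)
  have hle : ∑ j, b j * (I j - I' j) ≤ V :=
    le_of_tendsto hlim (eventually_nhdsWithin_of_forall fun δ hδ =>
      hV _ (integral_mul_divg_pairField_mem_testIntegrals hδ hh hb hc hc' hgrid u))
  have hsum : ∑ j, b j * (I j - I' j) = (2 * h)⁻¹ * ∑ j, |I' j - I j| := by
    simp_rw [Finset.mul_sum, b, mul_assoc, sign_mul_self, abs_sub_comm]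
  rw [hsum, inv_mul_le_iff₀ (by positivity)] at hle
  exact hle

lemma zero_mem_testIntegrals {n : ℕ} (u : Eucl n → ℝ) (Ω : Set (Eucl n)) :
    (0 : ℝ) ∈ testIntegrals u Ω :=
  ⟨0, contDiff_const, HasCompactSupport.zero, by simp, by simp, by simp [divg]⟩

lemma cubeAvg_eq_setIntegral_openCell {n N : ℕ} (L : ℝ) (u : Eucl n → ℝ) (ι : Fin n → Fin N) :
    cubeAvg n N L u ι = ((N : ℝ) / L) ^ n * ∫ x in openCell (L / N) (fun i => ι i), u x := by
  rw [cubeAvg, setIntegral_congr_set (subcube_ae_eq_openCell N L ι)]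

lemma val_update_eq_add_single {n N : ℕ} (ι : Fin n → Fin N) (k : Fin n)
    (hk : (ι k : ℕ) + 1 < N) :
    (fun i => (Function.update ι k ⟨ι k + 1, hk⟩ i : ℕ)) =
      (fun i => (ι i : ℕ)) + Pi.single k 1 := by
  funext i
  rcases eq_or_ne i k with rfl | hik <;> simp [*]

theorem sum_abs_cubeAvg_succ_sub_le {n N P : ℕ} {L V : ℝ} (hN : 0 < N) (hL : 0 < L)
    {u : Eucl n → ℝ} (hu : IntegrableOn u (opencube n L))
    (hV : ∀ v ∈ testIntegrals u (opencube n L), v ≤ V) {κ : ℕ → Fin n → Fin N}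
    (hκ : Set.InjOn κ (Set.Iic P)) (k : Fin P → Fin n) (hk : ∀ j : Fin P, (κ j (k j) : ℕ) + 1 < N)
    (hstep : ∀ j : Fin P, κ (j + 1) = Function.update (κ j) (k j) ⟨κ j (k j) + 1, hk j⟩) :
    ∑ j ∈ Finset.range P, |cubeAvg n N L u (κ (j + 1)) - cubeAvg n N L u (κ j)| ≤
      ((N : ℝ) / L) ^ n * (2 * (L / N) * V) := by
  have hval : Function.Injective fun ι : Fin n → Fin N => fun i => (ι i : ℕ) :=
    Fin.val_injective.comp_left
  have hsucc (j : Fin P) :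
      (fun i => (κ (j + 1) i : ℕ)) = (fun i => (κ j i : ℕ)) + Pi.single (k j) 1 := by
    rw [hstep, val_update_eq_add_single]
  have hinj : Function.Injective fun j : Fin P => κ j :=
    fun j j' h => Fin.ext (hκ (mem_Iic.2 j.2.le) (mem_Iic.2 j'.2.le) h)
  have hinj' : Function.Injective fun j : Fin P => κ (j + 1) :=
    fun j j' h => Fin.ext (by simpa using hκ (mem_Iic.2 j.2) (mem_Iic.2 j'.2) h)
  have key := sum_abs_setIntegral_openCell_sub_le (div_pos hL (Nat.cast_pos.2 hN)) hu hV
    (c := fun (j : Fin P) i => (κ j i : ℕ)) (k := k) (hval.comp hinj)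
    (by simp_rw [← hsucc]; exact hval.comp hinj') fun j i => by
      have hlt : ((κ (j + 1) i : ℕ) + 1 : ℝ) ≤ N := by exact_mod_cast (κ (j + 1) i).isLt
      rw [← hsucc]; push_cast
      calc ((κ (j + 1) i : ℕ) + 1 : ℝ) * (L / N) ≤ N * (L / N) := by gcongr
        _ = L := mul_div_cancel₀ _ (by positivity)
  simp_rw [← hsucc] at key
  rw [← Fin.sum_univ_eq_sum_range (fun j => |cubeAvg n N L u (κ (j + 1)) - cubeAvg n N L u (κ j)|)]
  simp_rw [cubeAvg_eq_setIntegral_openCell, ← mul_sub, abs_mul,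
    abs_of_nonneg (by positivity : (0 : ℝ) ≤ (N / L) ^ n), ← Finset.mul_sum]
  exact mul_le_mul_of_nonneg_left key (by positivity)

theorem sum_avg_diff_le_general (n N : ℕ) (L V : ℝ)
    (hL : 0 < L)
    (u : Eucl n → ℝ) (hu_int : IntegrableOn u (opencube n L))
    (hu_bv : ∀ v ∈ testIntegrals u (opencube n L), v ≤ V)
    (κ : ℕ → (Fin n → Fin N))
    (henum : ∀ ι : Fin n → Fin N, ∃! j : ℕ, j < N ^ n ∧ κ j = ι)
    (hstep : ∀ j : ℕ, j + 1 < N ^ n → ∃ (k : Fin n) (hk : (κ j k : ℕ) + 1 < N),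
      κ (j + 1) = Function.update (κ j) k ⟨(κ j k : ℕ) + 1, hk⟩) :
    ∑ j ∈ Finset.range (N ^ n - 1), |cubeAvg n N L u (κ (j + 1)) - cubeAvg n N L u (κ j)| ≤
      2 * V * ((N : ℝ) / L) ^ (n - 1) := by
  have hV : 0 ≤ V := hu_bv 0 (zero_mem_testIntegrals u _)
  rcases Nat.eq_zero_or_pos (N ^ n - 1) with hP | hP
  · rw [hP, Finset.sum_range_zero]; positivity
  obtain ⟨hn, hN⟩ : n ≠ 0 ∧ N ≠ 0 := by
    constructor <;> rintro rfl
    · simp at hP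
    · exact (zero_pow_le_one (M₀ := ℕ) n).not_gt (by omega)
  have hκ : Set.InjOn κ (Set.Iic (N ^ n - 1)) := fun j hj j' hj' hjj' =>
    (henum (κ j)).unique ⟨by grind, rfl⟩ ⟨by grind, hjj'.symm⟩
  choose k hk hκk using fun j : Fin (N ^ n - 1) => hstep j (by omega)
  calc _ ≤ ((N : ℝ) / L) ^ n * (2 * (L / N) * V) :=
        sum_abs_cubeAvg_succ_sub_le (Nat.pos_of_ne_zero hN) hL hu_int hu_bv hκ k hk hκk
    _ = 2 * V * ((N : ℝ) / L) ^ (n - 1) := by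
        obtain ⟨m, rfl⟩ := Nat.exists_eq_add_one_of_ne_zero hn
        rw [Nat.add_sub_cancel, pow_succ]
        field_simp

/-- If `u` has bounded variation on `(0,L)^n` with `|Du|((0,L)^n) ≤ V`, and
`κ⁰, κ¹, …, κ^{N^n - 1}` is an enumeration of `{0,…,N-1}^n` in which consecutive indices
differ by addition of a standard basis vector, then the averages along the enumeration
satisfy `∑ |u_{κ^{j+1}} - u_{κ^j}| ≤ 2V (N/L)^{n-1}`. -/
theorem sum_avg_diff_le (n N : ℕ) (hn : 1 ≤ n) (hN : 0 < N) (L V : ℝ)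
    (hL : 0 < L) (hV : 0 < V)
    (u : Eucl n → ℝ) (hu_int : IntegrableOn u (opencube n L))
    (hu_bv : ∀ v ∈ testIntegrals u (opencube n L), v ≤ V)
    (κ : ℕ → (Fin n → Fin N))
    (henum : ∀ ι : Fin n → Fin N, ∃! j : ℕ, j < N ^ n ∧ κ j = ι)
    (hstep : ∀ j : ℕ, j + 1 < N ^ n → ∃ (k : Fin n) (hk : (κ j k : ℕ) + 1 < N),
      κ (j + 1) = Function.update (κ j) k ⟨(κ j k : ℕ) + 1, hk⟩) :
    ∑ j ∈ Finset.range (N ^ n - 1), |cubeAvg n N L u (κ (j + 1)) - cubeAvg n N L u (κ j)| ≤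
      2 * V * ((N : ℝ) / L) ^ (n - 1) :=
  sum_avg_diff_le_general n N L V hL u hu_int hu_bv κ henum hstep
end

section
/- Let n ≥ 1, L > 0, N ∈ ℕ, and h > 0. For δ = (δ_ι)_{ι ∈ {0,…,N−1}^n} with each δ_ι ∈ {0,1}, define u_δ : [0,L]^n → {0,h} by u_δ(x) = Σ_ι h·δ_ι·χ_{int(□_ι)}(x). Then u_δ is of bounded variation on (0,L)^n with |Du_δ|((0,L)^n) ≤ (2L)^{n−1}·N·h. In particular, if 0 < h ≤ min{M, V/(2^{n−1}·L^{n−1}·N)}, then u_δ ∈ F_{[L,M,V]} for every such δ. -/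
/-!
`u_δ` is `h` times the indicator of a union of pairwise disjoint open grid cells of side `L/N`.
Testing against a `C¹` field `φ` with `|φ| ≤ 1` supported in `(0,L)^n`, the divergence theorem
on each cell turns `∫ u_δ div φ` into `h` times a sum, over the `n` directions and the `N^(n-1)`
columns of cells in each direction, of `∑ⱼ δⱼ (Φ(j+1) - Φ(j))`, where `Φ(k)` is the flux of `φ`
through the `k`-th cross-section of the column. The two outermost fluxes vanish and
`|Φ| ≤ (L/N)^(n-1)`, so summation by parts bounds each column by `(N-1) (L/N)^(n-1)`.
Altogether `|∫ u_δ div φ| ≤ h n (N-1) L^(n-1) ≤ (2L)^(n-1) N h`.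
-/

open MeasureTheory Set

/-- The function `u_δ = ∑_ι h δ_ι χ_{int(□_ι)}` associated with a `0/1`-pattern `δ` on the
index set `{0,…,N-1}^n`. -/
noncomputable def udelta (n N : ℕ) (L h : ℝ) (δ : (Fin n → Fin N) → Bool) : Eucl n → ℝ :=
  fun x => ∑ ι : Fin n → Fin N,
    Set.indicator (interior (subcube n N L ι)) (fun _ => if δ ι then h else 0) x

theorem abs_sum_mul_sub_le_of_eq_zero (d F : ℕ → ℝ) {A C : ℝ} {K : ℕ}
    (hd : ∀ j, |d (j + 1) - d j| ≤ A) (hF : ∀ j, |F j| ≤ C) (h0 : F 0 = 0) (hK : F K = 0) :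
    |∑ j ∈ Finset.range K, d j * (F (j + 1) - F j)| ≤ (K - 1 : ℕ) * (A * C) := by
  have hA : 0 ≤ A := (abs_nonneg _).trans (hd 0)
  have hsum : ∑ j ∈ Finset.range K, d j * (F (j + 1) - F j)
      = -∑ j ∈ Finset.range (K - 1), (d (j + 1) - d j) * F (j + 1) := by
    have := Finset.sum_range_by_parts d (fun j => F (j + 1) - F j) K
    simp only [Finset.sum_range_sub, h0, hK, sub_zero, smul_eq_mul, mul_zero, zero_sub] at this
    exact this
  rw [hsum, abs_neg]
  calc _ ≤ ∑ j ∈ Finset.range (K - 1), |(d (j + 1) - d j) * F (j + 1)| :=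
        Finset.abs_sum_le_sum_abs _ _
    _ ≤ ∑ _j ∈ Finset.range (K - 1), A * C :=
        Finset.sum_le_sum fun j _ => by
          rw [abs_mul]; exact mul_le_mul (hd j) (hF _) (abs_nonneg _) hA
    _ = (K - 1 : ℕ) * (A * C) := by simp

section GridCell

variable {n N : ℕ}

def gridCell (c : ℝ) (ι : Fin n → Fin N) : Set (Fin n → ℝ) :=
  Icc (fun j => ((ι j : ℕ) : ℝ) * c) (fun j => (((ι j : ℕ) : ℝ) + 1) * c)

theorem gridCell_lower_le_upper {c : ℝ} (hc : 0 ≤ c) (ι : Fin n → Fin N) :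
    (fun j => ((ι j : ℕ) : ℝ) * c) ≤ fun j => (((ι j : ℕ) : ℝ) + 1) * c :=
  fun j => by dsimp only; linarith

theorem measureReal_gridCell {c : ℝ} (hc : 0 ≤ c) (ι : Fin n → Fin N) :
    volume.real (gridCell c ι) = c ^ n := by
  rw [gridCell, measureReal_def, Real.volume_Icc_pi_toReal (gridCell_lower_le_upper hc ι)]
  simp [add_mul]

end GridCell

theorem sum_pi_eq_sum_sum_insertNth {α M : Type*} [Fintype α] [AddCommMonoid M] {m : ℕ}
    (i : Fin (m + 1)) (G : (Fin (m + 1) → α) → M) :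
    ∑ ι, G ι = ∑ κ : Fin m → α, ∑ j : α, G (i.insertNth j κ) := by
  rw [← (Fin.insertNthEquiv (fun _ => α) i).sum_comp, Fintype.sum_prod_type, Finset.sum_comm]
  rfl

section Faces

variable {m N : ℕ}

/-- The integral of `F` over the cross-section `{x i = k c}` of the column of grid cells whose
other coordinates are indexed by `κ`. -/
noncomputable def faceIntegral (F : (Fin (m + 1) → ℝ) → ℝ) (i : Fin (m + 1)) (c : ℝ)
    (κ : Fin m → Fin N) (k : ℕ) : ℝ :=
  ∫ x in gridCell c κ, F (i.insertNth ((k : ℝ) * c) x)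

theorem abs_faceIntegral_le {F : (Fin (m + 1) → ℝ) → ℝ} {B c : ℝ} (hF : ∀ x, |F x| ≤ B)
    (hc : 0 ≤ c) (i : Fin (m + 1)) (κ : Fin m → Fin N) (k : ℕ) :
    |faceIntegral F i c κ k| ≤ B * c ^ m := by
  rw [← Real.norm_eq_abs, ← measureReal_gridCell hc κ]
  exact norm_setIntegral_le_of_norm_le_const measure_Icc_lt_top fun x _ => hF _

theorem integral_divergence_gridCell {c : ℝ} (hc : 0 ≤ c) (ι : Fin (m + 1) → Fin N)
    {f : (Fin (m + 1) → ℝ) → Fin (m + 1) → ℝ}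
    {f' : (Fin (m + 1) → ℝ) → (Fin (m + 1) → ℝ) →L[ℝ] Fin (m + 1) → ℝ}
    (hf : ∀ x, HasFDerivAt f (f' x) x) (hdiv : Continuous fun x => ∑ i, f' x (Pi.single i 1) i) :
    ∫ x in gridCell c ι, ∑ i, f' x (Pi.single i 1) i =
      ∑ i, (faceIntegral (f · i) i c (ι ∘ i.succAbove) (ι i + 1) -
        faceIntegral (f · i) i c (ι ∘ i.succAbove) (ι i)) := by
  rw [gridCell, integral_divergence_of_hasFDerivAt_off_countable _ _
    (gridCell_lower_le_upper hc ι) f f' ∅ countable_empty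
    (fun x _ => (hf x).differentiableAt.continuousAt.continuousWithinAt)
    (fun x _ => hf x) hdiv.integrableOn_Icc]
  simp only [faceIntegral, gridCell, Nat.cast_add, Nat.cast_one]
  rfl

theorem abs_sum_mul_faceIntegral_sub_le {F : (Fin (m + 1) → ℝ) → ℝ} {c : ℝ} (hc : 0 ≤ c)
    (hF : ∀ x, |F x| ≤ 1) (i : Fin (m + 1)) (hF0 : ∀ x, x i = 0 → F x = 0)
    (hFN : ∀ x, x i = N * c → F x = 0) (w : Fin N → ℝ) (hw : ∀ j, w j ∈ Icc 0 1)
    (κ : Fin m → Fin N) :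
    |∑ j : Fin N, w j * (faceIntegral F i c κ (j + 1) - faceIntegral F i c κ j)|
      ≤ (N - 1 : ℕ) * c ^ m := by
  set d : ℕ → ℝ := fun k => if hk : k < N then w ⟨k, hk⟩ else 0
  have hd : ∀ k, d k ∈ Icc 0 1 := fun k => by
    by_cases hk : k < N
    · simpa [d, hk] using hw _
    · simp [d, hk]
  have hface : ∀ k : ℕ, (k = 0 ∨ k = N) → faceIntegral F i c κ k = 0 := by
    rintro k (rfl | rfl) <;> simp [faceIntegral, hF0, hFN]
  have := abs_sum_mul_sub_le_of_eq_zero d (faceIntegral F i c κ) (A := 1) (K := N)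
    (fun k => abs_sub_le_iff.2 ⟨by linarith [(hd k).1, (hd (k + 1)).2],
      by linarith [(hd k).2, (hd (k + 1)).1]⟩)
    (abs_faceIntegral_le hF hc i κ) (hface 0 (Or.inl rfl)) (hface N (Or.inr rfl))
  rw [← Fin.sum_univ_eq_sum_range (fun k => d k * (faceIntegral F i c κ (k + 1) -
    faceIntegral F i c κ k)), one_mul, one_mul] at this
  simpa [d] using this

end Faces

theorem abs_sum_mul_integral_divergence_gridCell_le {m N : ℕ} {c : ℝ} (hc : 0 ≤ c)
    (w : (Fin (m + 1) → Fin N) → ℝ) (hw : ∀ ι, w ι ∈ Icc 0 1)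
    {f : (Fin (m + 1) → ℝ) → Fin (m + 1) → ℝ}
    {f' : (Fin (m + 1) → ℝ) → (Fin (m + 1) → ℝ) →L[ℝ] Fin (m + 1) → ℝ}
    (hf : ∀ x, HasFDerivAt f (f' x) x) (hdiv : Continuous fun x => ∑ i, f' x (Pi.single i 1) i)
    (hf1 : ∀ x i, |f x i| ≤ 1) (hf0 : ∀ x i, x i = 0 ∨ x i = N * c → f x i = 0) :
    |∑ ι, w ι * ∫ x in gridCell c ι, ∑ i, f' x (Pi.single i 1) i|
      ≤ (m + 1) * N ^ m * (N - 1 : ℕ) * c ^ m := by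
  have hsplit : ∑ ι, w ι * ∫ x in gridCell c ι, ∑ i, f' x (Pi.single i 1) i =
      ∑ i, ∑ κ : Fin m → Fin N, ∑ j : Fin N, w (i.insertNth j κ) *
        (faceIntegral (f · i) i c κ (j + 1) - faceIntegral (f · i) i c κ j) := by
    simp only [integral_divergence_gridCell hc _ hf hdiv, Finset.mul_sum]
    rw [Finset.sum_comm]
    refine Finset.sum_congr rfl fun i _ => ?_
    rw [sum_pi_eq_sum_sum_insertNth i]
    simp only [Fin.insertNth_apply_same, Fin.insertNth_comp_succAbove]
  have hcolumn : ∀ i κ, |∑ j : Fin N, w (i.insertNth j κ) *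
      (faceIntegral (f · i) i c κ (j + 1) - faceIntegral (f · i) i c κ j)|
        ≤ (N - 1 : ℕ) * c ^ m := fun i κ =>
    abs_sum_mul_faceIntegral_sub_le hc (fun x => hf1 x i) i
      (fun x hx => hf0 x i (Or.inl hx)) (fun x hx => hf0 x i (Or.inr hx)) _
      (fun j => hw _) κ
  rw [hsplit]
  calc _ ≤ ∑ i, ∑ κ : Fin m → Fin N, |∑ j : Fin N, w (i.insertNth j κ) *
        (faceIntegral (f · i) i c κ (j + 1) - faceIntegral (f · i) i c κ j)| :=
        (Finset.abs_sum_le_sum_abs _ _).trans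
          (Finset.sum_le_sum fun i _ => Finset.abs_sum_le_sum_abs _ _)
    _ ≤ ∑ _i : Fin (m + 1), ∑ _κ : Fin m → Fin N, ((N - 1 : ℕ) : ℝ) * c ^ m :=
        Finset.sum_le_sum fun i _ => Finset.sum_le_sum fun κ _ => hcolumn i κ
    _ = (m + 1) * N ^ m * (N - 1 : ℕ) * c ^ m := by
        simp only [Finset.sum_const, Finset.card_univ, Fintype.card_fun, Fintype.card_fin,
          nsmul_eq_mul]
        push_cast
        ring

section Subcube

variable {n N : ℕ} {L : ℝ}

theorem subcube_eq_preimage_gridCell (ι : Fin n → Fin N) :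
    subcube n N L ι = WithLp.ofLp ⁻¹' gridCell (L / N) ι := by
  ext x
  simp [subcube, gridCell, Pi.le_def, forall_and]

theorem isCompact_subcube (ι : Fin n → Fin N) : IsCompact (subcube n N L ι) := by
  rw [subcube_eq_preimage_gridCell]
  exact (EuclideanSpace.equiv (Fin n) ℝ).toHomeomorph.isCompact_preimage.2 isCompact_Icc

theorem convex_subcube (ι : Fin n → Fin N) : Convex ℝ (subcube n N L ι) := by
  rw [subcube_eq_preimage_gridCell]
  exact (convex_Icc _ _).linear_preimage (EuclideanSpace.equiv (Fin n) ℝ).toLinearMap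

theorem mem_interior_subcube {ι : Fin n → Fin N} {x : Eucl n} :
    x ∈ interior (subcube n N L ι) ↔
      ∀ i, x i ∈ Ioo (((ι i : ℕ) : ℝ) * (L / N)) ((((ι i : ℕ) : ℝ) + 1) * (L / N)) := by
  rw [subcube_eq_preimage_gridCell, gridCell, ← pi_univ_Icc]
  change x ∈ interior ((EuclideanSpace.equiv (Fin n) ℝ).toHomeomorph ⁻¹' _) ↔ _
  rw [← Homeomorph.preimage_interior, interior_pi_set finite_univ]
  simp

theorem pairwise_disjoint_interior_subcube :
    Pairwise (Function.onFun Disjoint fun ι : Fin n → Fin N => interior (subcube n N L ι)) := by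
  intro ι κ hικ
  refine Set.disjoint_left.2 fun x hι hκ => ?_
  obtain ⟨i, hi⟩ := Function.ne_iff.1 hικ
  have hxι := mem_interior_subcube.1 hι i
  have hxκ := mem_interior_subcube.1 hκ i
  have hc : 0 < L / N := by nlinarith [hxι.1, hxι.2]
  rcases Nat.lt_or_gt_of_ne (Fin.val_ne_of_ne hi) with hlt | hlt
  · have : ((ι i : ℕ) : ℝ) + 1 ≤ (κ i : ℕ) := by exact_mod_cast hlt
    nlinarith [hxι.2, hxκ.1]
  · have : ((κ i : ℕ) : ℝ) + 1 ≤ (ι i : ℕ) := by exact_mod_cast hlt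
    nlinarith [hxι.1, hxκ.2]

theorem interior_subcube_subset_opencube (hN : 0 < N) (hL : 0 < L) (ι : Fin n → Fin N) :
    interior (subcube n N L ι) ⊆ opencube n L := by
  intro x hx i
  have hxi := mem_interior_subcube.1 hx i
  have hc : 0 < L / N := by positivity
  have hNc : (N : ℝ) * (L / N) = L := by field_simp
  have hιN : ((ι i : ℕ) : ℝ) + 1 ≤ N := by exact_mod_cast (ι i).isLt
  constructor <;> nlinarith [hxi.1, hxi.2]

theorem setIntegral_interior_subcube (g : Eucl n → ℝ) (ι : Fin n → Fin N) :
    ∫ x in interior (subcube n N L ι), g x = ∫ y in gridCell (L / N) ι, g (WithLp.toLp 2 y) := by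
  rw [setIntegral_congr_set (interior_ae_eq_of_null_frontier
    ((convex_subcube ι).addHaar_frontier volume)),
    ← (PiLp.volume_preserving_toLp (Fin n)).setIntegral_preimage_emb
      (MeasurableEquiv.toLp 2 (Fin n → ℝ)).measurableEmbedding, subcube_eq_preimage_gridCell]
  rfl

end Subcube

section Udelta

variable {n N : ℕ} {L h : ℝ}

theorem udelta_eq_indicator (δ : (Fin n → Fin N) → Bool) :
    udelta n N L h δ =
      (⋃ ι ∈ Finset.univ.filter (δ ·), interior (subcube n N L ι)).indicator fun _ => h := by
  ext x
  rw [Finset.indicator_biUnion_apply _ _ (pairwise_disjoint_interior_subcube.set_pairwise _),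
    Finset.sum_filter, udelta]
  refine Finset.sum_congr rfl fun ι _ => ?_
  cases δ ι <;> simp

theorem integrable_udelta (δ : (Fin n → Fin N) → Bool) : Integrable (udelta n N L h δ) := by
  rw [udelta_eq_indicator, integrable_indicator_iff
    (Finset.measurableSet_biUnion _ fun ι _ => isOpen_interior.measurableSet)]
  refine integrableOn_const (measure_biUnion_lt_top (Finset.finite_toSet _) fun ι _ => ?_).ne
  exact (measure_mono interior_subset).trans_lt (isCompact_subcube ι).measure_lt_top

theorem abs_udelta_le (hh : 0 ≤ h) (δ : (Fin n → Fin N) → Bool) (x : Eucl n) :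
    |udelta n N L h δ x| ≤ h := by
  classical
  rw [udelta_eq_indicator, Set.indicator_apply]
  split_ifs <;> simp [abs_of_nonneg hh, hh]

theorem setIntegral_opencube_udelta_mul (hN : 0 < N) (hL : 0 < L) (δ : (Fin n → Fin N) → Bool)
    {g : Eucl n → ℝ} (hg : Continuous g) :
    ∫ x in opencube n L, udelta n N L h δ x * g x =
      h * ∑ ι ∈ Finset.univ.filter (δ ·), ∫ y in gridCell (L / N) ι, g (WithLp.toLp 2 y) := by
  have hopen : ∀ ι, MeasurableSet (interior (subcube n N L ι)) :=
    fun ι => isOpen_interior.measurableSet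
  simp_rw [udelta_eq_indicator, ← Set.indicator_mul_left]
  rw [setIntegral_indicator (Finset.measurableSet_biUnion _ fun ι _ => hopen ι),
    inter_eq_self_of_subset_right
      (iUnion₂_subset fun ι _ => interior_subcube_subset_opencube hN hL ι),
    integral_const_mul, integral_biUnion_finset _ (fun ι _ => hopen ι)
      (pairwise_disjoint_interior_subcube.set_pairwise _)
      fun ι _ =>
        (hg.continuousOn.integrableOn_compact (isCompact_subcube ι)).mono_set interior_subset]
  simp_rw [setIntegral_interior_subcube]

end Udelta

theorem continuous_divg {n : ℕ} {φ : Eucl n → Eucl n} (hφ : ContDiff ℝ 1 φ) :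
    Continuous (divg φ) :=
  continuous_finsetSum _ fun i _ => (EuclideanSpace.proj i).continuous.comp
    ((hφ.continuous_fderiv one_ne_zero).clm_apply continuous_const)

theorem abs_setIntegral_opencube_udelta_mul_divg_le {m N : ℕ} (hN : 0 < N) {L h : ℝ}
    (hL : 0 < L) (hh : 0 ≤ h) (δ : (Fin (m + 1) → Fin N) → Bool)
    {φ : Eucl (m + 1) → Eucl (m + 1)} (hφ : ContDiff ℝ 1 φ)
    (hsupp : tsupport φ ⊆ opencube (m + 1) L) (hφ1 : ∀ x, ‖φ x‖ ≤ 1) :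
    |∫ x in opencube (m + 1) L, udelta (m + 1) N L h δ x * divg φ x|
      ≤ h * ((m + 1) * N ^ m * (N - 1 : ℕ) * (L / N) ^ m) := by
  -- `φ` read in the coordinates `Fin (m + 1) → ℝ` of the divergence theorem; the divergence of
  -- the transported field is `divg φ` definitionally.
  set e := EuclideanSpace.equiv (Fin (m + 1)) ℝ
  set f : (Fin (m + 1) → ℝ) → Fin (m + 1) → ℝ := fun y => e (φ (e.symm y))
  set f' : (Fin (m + 1) → ℝ) → (Fin (m + 1) → ℝ) →L[ℝ] Fin (m + 1) → ℝ := fun y =>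
    (e : Eucl (m + 1) →L[ℝ] _).comp
      ((fderiv ℝ φ (e.symm y)).comp (e.symm : (Fin (m + 1) → ℝ) →L[ℝ] Eucl (m + 1)))
  have hf : ∀ y, HasFDerivAt f (f' y) y := fun y => e.hasFDerivAt.comp y
    (((hφ.differentiable one_ne_zero) _).hasFDerivAt.comp y e.symm.hasFDerivAt)
  have hdiv : Continuous fun y => ∑ i, f' y (Pi.single i 1) i :=
    (continuous_divg hφ).comp e.symm.continuous
  have hf1 : ∀ y i, |f y i| ≤ 1 := fun y i => (PiLp.norm_apply_le _ i).trans (hφ1 _)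
  have hf0 : ∀ y i, y i = 0 ∨ y i = N * (L / N) → f y i = 0 := by
    intro y i hyi
    have hy : e.symm y ∉ tsupport φ := fun hy => by
      have := hsupp hy i
      rcases hyi with hyi | hyi
      · exact (ne_of_gt this.1) hyi
      · exact (ne_of_lt this.2) (hyi.trans (by field_simp))
    simp [f, image_eq_zero_of_notMem_tsupport hy]
  have hw : ∀ ι : Fin (m + 1) → Fin N, (if δ ι then 1 else 0 : ℝ) ∈ Icc 0 1 := fun ι => by
    split <;> simp
  rw [setIntegral_opencube_udelta_mul hN hL δ (continuous_divg hφ), abs_mul, abs_of_nonneg hh,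
    Finset.sum_filter]
  gcongr
  have := abs_sum_mul_integral_divergence_gridCell_le (by positivity) _ hw hf hdiv hf1 hf0
  simp only [ite_mul, one_mul, zero_mul] at this
  exact this

theorem udelta_BV_general (n N : ℕ) (hn : 1 ≤ n) (hN : 0 < N) (L M V h : ℝ)
    (hL : 0 < L) (hh : 0 < h)
    (δ : (Fin n → Fin N) → Bool) :
    (IntegrableOn (udelta n N L h δ) (opencube n L) ∧
      ∀ v ∈ testIntegrals (udelta n N L h δ) (opencube n L), v ≤ (2 * L) ^ (n - 1) * N * h) ∧
    (h ≤ min M (V / (2 ^ (n - 1) * L ^ (n - 1) * N)) → udelta n N L h δ ∈ Fclass n L M V) := by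
  obtain ⟨m, rfl⟩ := Nat.exists_eq_add_of_le' hn
  rw [Nat.add_sub_cancel]
  have hbound : ∀ v ∈ testIntegrals (udelta (m + 1) N L h δ) (opencube (m + 1) L),
      v ≤ (2 * L) ^ m * N * h := by
    rintro v ⟨φ, hφ, -, hsupp, hφ1, rfl⟩
    have hm : (m + 1 : ℝ) ≤ 2 ^ m := by exact_mod_cast Nat.lt_two_pow_self
    have hN1 : ((N - 1 : ℕ) : ℝ) ≤ N := by exact_mod_cast N.sub_le 1
    calc _ ≤ _ := le_abs_self _
      _ ≤ h * ((m + 1) * N ^ m * (N - 1 : ℕ) * (L / N) ^ m) :=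
        abs_setIntegral_opencube_udelta_mul_divg_le hN hL hh.le δ hφ hsupp hφ1
      _ = h * (m + 1) * (N - 1 : ℕ) * L ^ m := by
        rw [div_pow]
        field_simp
      _ ≤ h * 2 ^ m * N * L ^ m := by gcongr
      _ = (2 * L) ^ m * N * h := by ring
  refine ⟨⟨(integrable_udelta δ).integrableOn, hbound⟩, fun hhMV => ?_⟩
  obtain ⟨hhM, hhV⟩ := le_min_iff.1 hhMV
  rw [le_div_iff₀ (by positivity)] at hhV
  refine ⟨(integrable_udelta δ).integrableOn,
    ae_of_all _ fun x => (abs_udelta_le hh.le δ x).trans hhM, fun v hv => ?_⟩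
  calc v ≤ (2 * L) ^ m * N * h := hbound v hv
    _ = h * (2 ^ m * L ^ m * N) := by ring
    _ ≤ V := hhV

/-- Each `u_δ` is of bounded variation on `(0,L)^n` with
`|Du_δ|((0,L)^n) ≤ (2L)^{n-1} N h`; in particular, if
`0 < h ≤ min{M, V/(2^{n-1} L^{n-1} N)}` then `u_δ ∈ F_{[L,M,V]}`. -/
theorem udelta_BV (n N : ℕ) (hn : 1 ≤ n) (hN : 0 < N) (L M V h : ℝ)
    (hL : 0 < L) (hM : 0 < M) (hV : 0 < V) (hh : 0 < h)
    (δ : (Fin n → Fin N) → Bool) :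
    (IntegrableOn (udelta n N L h δ) (opencube n L) ∧
      ∀ v ∈ testIntegrals (udelta n N L h δ) (opencube n L), v ≤ (2 * L) ^ (n - 1) * N * h) ∧
    (h ≤ min M (V / (2 ^ (n - 1) * L ^ (n - 1) * N)) → udelta n N L h δ ∈ Fclass n L M V) :=
  udelta_BV_general n N hn hN L M V h hL hh δ
end
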